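/- arXiv:2601.10106 — 8 statements merged into one kernel-verified Lean document; each statement's English description precedes it below -/
import Mathlib

section
/- Let R be a commutative ring and let α, β, γ, δ ∈ R. Set a₀ = 8αβ⁵, a₁ = 4β⁵γ + 20αβ⁴δ, a₂ = 4β⁴γδ + 8αβ³δ², a₃ = 4β³γδ² + 4αβ²δ³, a₄ = 4β²γδ³ + 2αβδ⁴, a₅ = 5βγδ⁴ + αδ⁵, a₆ = γδ⁵. Then Q₁ = Q₂ = Q₃ = Q₄ = Q₅ = 0 and F_D = 0; that is, the image of the normalization map ν : ℙ¹ × ℙ¹ → ℙ⁶ lies on Y and is contained in the divisor D. -/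
/-- The image of the normalization map `ν : ℙ¹ × ℙ¹ → ℙ⁶` satisfies the five
quadrics cutting out the split quintic del Pezzo threefold `Y ⊂ ℙ⁶` as well as the form
`F_D` cutting out the divisor `D`. -/
theorem stmt_2 {R : Type*} [CommRing R] (α β γ δ a₀ a₁ a₂ a₃ a₄ a₅ a₆ : R)
    (h₀ : a₀ = 8 * α * β ^ 5)
    (h₁ : a₁ = 4 * β ^ 5 * γ + 20 * α * β ^ 4 * δ)
    (h₂ : a₂ = 4 * β ^ 4 * γ * δ + 8 * α * β ^ 3 * δ ^ 2)
    (h₃ : a₃ = 4 * β ^ 3 * γ * δ ^ 2 + 4 * α * β ^ 2 * δ ^ 3)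
    (h₄ : a₄ = 4 * β ^ 2 * γ * δ ^ 3 + 2 * α * β * δ ^ 4)
    (h₅ : a₅ = 5 * β * γ * δ ^ 4 + α * δ ^ 5)
    (h₆ : a₆ = γ * δ ^ 5) :
    a₀ * a₄ - a₁ * a₃ + a₂ ^ 2 = 0 ∧
    a₀ * a₅ - a₁ * a₄ + a₂ * a₃ = 0 ∧
    a₀ * a₆ - a₂ * a₄ + a₃ ^ 2 = 0 ∧
    a₁ * a₆ - a₂ * a₅ + a₃ * a₄ = 0 ∧
    a₂ * a₆ - a₃ * a₅ + a₄ ^ 2 = 0 ∧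
    5 * a₂ * a₄ - 4 * a₁ * a₅ + 27 * a₀ * a₆ = 0 := by
  subst h₀ h₁ h₂ h₃ h₄ h₅ h₆; refine ⟨by ring, by ring, by ring, by ring, by ring, by ring⟩
end

section
/- Let R be a commutative ring in which 2 = 0, and let s, t ∈ R. Set a₀ = s, a₁ = t, a₂ = t, a₃ = s + t, a₄ = t, a₅ = t, a₆ = s. Then Q₁ = Q₂ = Q₃ = Q₄ = Q₅ = 0; that is, in characteristic 2 the parametrized line (s:t) ↦ (s : t : t : s+t : t : t : s) lies on Y. -/
/-- In characteristic 2, the parametrized line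
`(s:t) ↦ (s : t : t : s+t : t : t : s)` satisfies the five quadrics cutting out the split
quintic del Pezzo threefold `Y ⊂ ℙ⁶`. -/
theorem stmt_4 {R : Type*} [CommRing R] (h2 : (2 : R) = 0) (s t a₀ a₁ a₂ a₃ a₄ a₅ a₆ : R)
    (h₀ : a₀ = s)
    (h₁ : a₁ = t)
    (h₂ : a₂ = t)
    (h₃ : a₃ = s + t)
    (h₄ : a₄ = t)
    (h₅ : a₅ = t)
    (h₆ : a₆ = s) :
    a₀ * a₄ - a₁ * a₃ + a₂ ^ 2 = 0 ∧
    a₀ * a₅ - a₁ * a₄ + a₂ * a₃ = 0 ∧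
    a₀ * a₆ - a₂ * a₄ + a₃ ^ 2 = 0 ∧
    a₁ * a₆ - a₂ * a₅ + a₃ * a₄ = 0 ∧
    a₂ * a₆ - a₃ * a₅ + a₄ ^ 2 = 0 := by
  rw [h₀, h₁, h₂, h₃, h₄, h₅, h₆]
  exact ⟨by ring, by linear_combination s * t * h2, by linear_combination (s ^ 2 + s * t) * h2, by linear_combination s * t * h2, by ring⟩
end

section
/- Let R be a commutative ring, let ε ∈ R with ε² = 1, and let s, t ∈ R. Set a₀ = 8s, a₁ = −4t, a₂ = 4εs, a₃ = 0, a₄ = −2s, a₅ = t, a₆ = −εs. Then Q₁ = Q₂ = Q₃ = Q₄ = Q₅ = 0; that is, both parametrized lines (s:t) ↦ (8s : −4t : ±4s : 0 : −2s : t : ∓s) lie on Y. -/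
/-- For `ε` with `ε² = 1`, the parametrized line
`(s:t) ↦ (8s : -4t : 4εs : 0 : -2s : t : -εs)` (covering both sign choices) satisfies the
five quadrics cutting out the split quintic del Pezzo threefold `Y ⊂ ℙ⁶`. -/
theorem stmt_5 {R : Type*} [CommRing R] (ε : R) (hε : ε ^ 2 = 1) (s t a₀ a₁ a₂ a₃ a₄ a₅ a₆ : R)
    (h₀ : a₀ = 8 * s)
    (h₁ : a₁ = -4 * t)
    (h₂ : a₂ = 4 * ε * s)
    (h₃ : a₃ = 0)
    (h₄ : a₄ = -2 * s)
    (h₅ : a₅ = t)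
    (h₆ : a₆ = -ε * s) :
    a₀ * a₄ - a₁ * a₃ + a₂ ^ 2 = 0 ∧
    a₀ * a₅ - a₁ * a₄ + a₂ * a₃ = 0 ∧
    a₀ * a₆ - a₂ * a₄ + a₃ ^ 2 = 0 ∧
    a₁ * a₆ - a₂ * a₅ + a₃ * a₄ = 0 ∧
    a₂ * a₆ - a₃ * a₅ + a₄ ^ 2 = 0 := by
  subst h₀ h₁ h₂ h₃ h₄ h₅ h₆
  refine ⟨?_, ?_, ?_, ?_, ?_⟩
  · linear_combination (16 * s ^ 2) * hε
  · ring
  · ring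
  · ring
  · linear_combination (-4 * s ^ 2) * hε
end

section
/- Let R be a commutative ring in which 2 = 0, let ω ∈ R satisfy ω² + ω + 1 = 0, and let s, t ∈ R. Set a₀ = s, a₁ = t, a₂ = tω², a₃ = s + tω, a₄ = t, a₅ = tω², a₆ = s. Then Q₁ = Q₂ = Q₃ = Q₄ = Q₅ = 0; that is, in characteristic 2 the parametrized line (s:t) ↦ (s : t : tω² : s+tω : t : tω² : s) lies on Y. -/
/-- In characteristic 2, with `ω` a primitive cube root of unity
(`ω² + ω + 1 = 0`), the parametrized line `(s:t) ↦ (s : t : tω² : s+tω : t : tω² : s)`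
satisfies the five quadrics cutting out the split quintic del Pezzo threefold `Y ⊂ ℙ⁶`. -/
theorem stmt_6 {R : Type*} [CommRing R] (h2 : (2 : R) = 0) (ω : R)
    (hω : ω ^ 2 + ω + 1 = 0) (s t a₀ a₁ a₂ a₃ a₄ a₅ a₆ : R)
    (h₀ : a₀ = s)
    (h₁ : a₁ = t)
    (h₂ : a₂ = t * ω ^ 2)
    (h₃ : a₃ = s + t * ω)
    (h₄ : a₄ = t)
    (h₅ : a₅ = t * ω ^ 2)
    (h₆ : a₆ = s) :
    a₀ * a₄ - a₁ * a₃ + a₂ ^ 2 = 0 ∧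
    a₀ * a₅ - a₁ * a₄ + a₂ * a₃ = 0 ∧
    a₀ * a₆ - a₂ * a₄ + a₃ ^ 2 = 0 ∧
    a₁ * a₆ - a₂ * a₅ + a₃ * a₄ = 0 ∧
    a₂ * a₆ - a₃ * a₅ + a₄ ^ 2 = 0 := by
  subst h₀ h₁ h₂ h₃ h₄ h₅ h₆
  refine ⟨?_, ?_, ?_, ?_, ?_⟩
  · linear_combination (a₄^2*ω^2 - a₄^2*ω) * hω
  · linear_combination (a₄^2*ω - a₄^2 + 2*a₆*a₄) * hω + (-a₆*a₄ - a₆*a₄*ω) * h2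
  · linear_combination (a₆*a₄*ω + a₆^2) * h2
  · linear_combination (a₄^2*ω - a₄^2*ω^2) * hω + (a₆*a₄) * h2
  · linear_combination (a₄^2 - a₄^2*ω) * hω
end

section
/- Let k be a field of characteristic different from 2, let b ∈ k, and let x = (x₀,…,x₆) ∈ k⁷ satisfy Q₁(x) = Q₂(x) = Q₃(x) = Q₄(x) = Q₅(x) = 0. Then the vector U(b)·x also satisfies Q₁ = Q₂ = Q₃ = Q₄ = Q₅ = 0; that is, the unipotent one-parameter group U(b) preserves the affine cone over the split quintic del Pezzo threefold Y. -/
/-- The 7×7 matrix `U(b)` of the unipotent one-parameter subgroup of the `PGL₂`-action on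
the split quintic del Pezzo threefold `Y ⊂ ℙ⁶`. -/
def Umat {R : Type*} [CommRing R] (b : R) : Matrix (Fin 7) (Fin 7) R :=
  !![1, 2*b, 10*b^2, 20*b^3, 20*b^4, 8*b^5, 8*b^6;
     0, 1, 10*b, 30*b^2, 40*b^3, 20*b^4, 24*b^5;
     0, 0, 1, 6*b, 12*b^2, 8*b^3, 12*b^4;
     0, 0, 0, 1, 4*b, 4*b^2, 8*b^3;
     0, 0, 0, 0, 1, 2*b, 6*b^2;
     0, 0, 0, 0, 0, 1, 6*b;
     0, 0, 0, 0, 0, 0, 1]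

private lemma vec7_five {α : Type*} (a : α) (u : Fin 6 → α) :
    Matrix.vecCons a u 5 = u 4 := rfl

private lemma vec7_six {α : Type*} (a : α) (u : Fin 6 → α) :
    Matrix.vecCons a u 6 = u 5 := rfl

private lemma vec6_five {α : Type*} (a : α) (u : Fin 5 → α) :
    Matrix.vecCons a u 5 = u 4 := rfl

/-- Over a field of characteristic ≠ 2, the unipotent one-parameter group
`U(b)` preserves the affine cone over the split quintic del Pezzo threefold `Y`. -/
theorem stmt_8 {k : Type*} [Field k] (hchar : ringChar k ≠ 2) (b : k) (x : Fin 7 → k)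
    (hQ1 : x 0 * x 4 - x 1 * x 3 + (x 2) ^ 2 = 0)
    (hQ2 : x 0 * x 5 - x 1 * x 4 + x 2 * x 3 = 0)
    (hQ3 : x 0 * x 6 - x 2 * x 4 + (x 3) ^ 2 = 0)
    (hQ4 : x 1 * x 6 - x 2 * x 5 + x 3 * x 4 = 0)
    (hQ5 : x 2 * x 6 - x 3 * x 5 + (x 4) ^ 2 = 0)
    (y : Fin 7 → k) (hy : y = Matrix.mulVec (Umat b) x) :
    y 0 * y 4 - y 1 * y 3 + (y 2) ^ 2 = 0 ∧
    y 0 * y 5 - y 1 * y 4 + y 2 * y 3 = 0 ∧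
    y 0 * y 6 - y 2 * y 4 + (y 3) ^ 2 = 0 ∧
    y 1 * y 6 - y 2 * y 5 + y 3 * y 4 = 0 ∧
    y 2 * y 6 - y 3 * y 5 + (y 4) ^ 2 = 0 := by
  subst hy
  simp only [Umat, Matrix.mulVec, dotProduct, Fin.sum_univ_seven,
    Matrix.cons_val', Matrix.cons_val_zero, Matrix.cons_val_one, Matrix.head_cons,
    Matrix.empty_val', Matrix.cons_val_fin_one, Matrix.head_fin_const,
    Matrix.cons_val_two, Matrix.tail_cons, Matrix.cons_val_three,
    Matrix.cons_val_four, Matrix.of_apply, vec7_five, vec7_six, vec6_five]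
  refine ⟨?_, ?_, ?_, ?_, ?_⟩
  · linear_combination hQ1 + 2*b*hQ2 + 6*b^2*hQ3 + 4*b^3*hQ4 + 4*b^4*hQ5
  · linear_combination hQ2 + 6*b*hQ3 + 6*b^2*hQ4 + 8*b^3*hQ5
  · linear_combination hQ3 + 2*b*hQ4 + 4*b^2*hQ5
  · linear_combination hQ4 + 4*b*hQ5
  · linear_combination hQ5
end

section
/- Let k be a field of characteristic 2, let a, b, c, d ∈ k with ad − bc = 1, and let x = (x₀,…,x₆) ∈ k⁷ satisfy Q₁(x) = Q₂(x) = Q₃(x) = Q₄(x) = Q₅(x) = 0. Then the vector y = σ'((a b; c d))·x also satisfies Q₁(y) = Q₂(y) = Q₃(y) = Q₄(y) = Q₅(y) = 0; that is, in characteristic 2 the action σ' of SL₂ preserves the affine cone over the split quintic del Pezzo threefold Y. -/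
/-- The 7×7 matrix `σ'(g)` of the `SL₂`-action on the split quintic del Pezzo threefold
`Y ⊂ ℙ⁶` in characteristic 2, for `g = (a b; c d)`. -/
def sigmaPrime {R : Type*} [CommRing R] (a b c d : R) : Matrix (Fin 7) (Fin 7) R :=
  !![a^3, 0, a^2*b, 0, a*b^2, 0, b^3;
     0, a^2, 0, a*b, 0, b^2, 0;
     a^2*c, 0, a^2*d, 0, b^2*c, 0, b^2*d;
     0, 0, 0, 1, 0, 0, 0;
     a*c^2, 0, b*c^2, 0, a*d^2, 0, b*d^2;
     0, c^2, 0, c*d, 0, d^2, 0;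
     c^3, 0, c^2*d, 0, c*d^2, 0, d^3]

private theorem cv0 {α : Type*} (x0 x1 x2 x3 x4 x5 x6 : α) : ![x0,x1,x2,x3,x4,x5,x6] 0 = x0 := rfl
private theorem cv1 {α : Type*} (x0 x1 x2 x3 x4 x5 x6 : α) : ![x0,x1,x2,x3,x4,x5,x6] 1 = x1 := rfl
private theorem cv2 {α : Type*} (x0 x1 x2 x3 x4 x5 x6 : α) : ![x0,x1,x2,x3,x4,x5,x6] 2 = x2 := rfl
private theorem cv3 {α : Type*} (x0 x1 x2 x3 x4 x5 x6 : α) : ![x0,x1,x2,x3,x4,x5,x6] 3 = x3 := rfl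
private theorem cv4 {α : Type*} (x0 x1 x2 x3 x4 x5 x6 : α) : ![x0,x1,x2,x3,x4,x5,x6] 4 = x4 := rfl
private theorem cv5 {α : Type*} (x0 x1 x2 x3 x4 x5 x6 : α) : ![x0,x1,x2,x3,x4,x5,x6] 5 = x5 := rfl
private theorem cv6 {α : Type*} (x0 x1 x2 x3 x4 x5 x6 : α) : ![x0,x1,x2,x3,x4,x5,x6] 6 = x6 := rfl

set_option maxHeartbeats 4000000 in
/-- Over a field of characteristic 2, the action `σ'` of `SL₂` preserves the
affine cone over the split quintic del Pezzo threefold `Y`. -/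
theorem stmt_9 {k : Type*} [Field k] (h2 : (2 : k) = 0) (a b c d : k)
    (hdet : a * d - b * c = 1) (x : Fin 7 → k)
    (hQ1 : x 0 * x 4 - x 1 * x 3 + (x 2) ^ 2 = 0)
    (hQ2 : x 0 * x 5 - x 1 * x 4 + x 2 * x 3 = 0)
    (hQ3 : x 0 * x 6 - x 2 * x 4 + (x 3) ^ 2 = 0)
    (hQ4 : x 1 * x 6 - x 2 * x 5 + x 3 * x 4 = 0)
    (hQ5 : x 2 * x 6 - x 3 * x 5 + (x 4) ^ 2 = 0)
    (y : Fin 7 → k) (hy : y = Matrix.mulVec (sigmaPrime a b c d) x) :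
    y 0 * y 4 - y 1 * y 3 + (y 2) ^ 2 = 0 ∧
    y 0 * y 5 - y 1 * y 4 + y 2 * y 3 = 0 ∧
    y 0 * y 6 - y 2 * y 4 + (y 3) ^ 2 = 0 ∧
    y 1 * y 6 - y 2 * y 5 + y 3 * y 4 = 0 ∧
    y 2 * y 6 - y 3 * y 5 + (y 4) ^ 2 = 0 := by
  subst hy
  simp only [sigmaPrime, Matrix.mulVec, dotProduct, Fin.sum_univ_seven, Matrix.of_apply,
    cv0, cv1, cv2, cv3, cv4, cv5, cv6]
  refine ⟨?_, ?_, ?_, ?_, ?_⟩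
  · linear_combination (a^2)*hQ1 + (a*b)*hQ3 + (b^2)*hQ5 + (b^2*x 4^2 + 3*b^2*x 2*x 6 + 2*b^3*d*x 4*x 6 + b^3*c*x 4^2 + 3*b^3*c*x 2*x 6 + a*b*x 2*x 4 + a*b*x 0*x 6 + a*b^2*d*x 4^2 + 3*a*b^2*d*x 2*x 6 + 3*a*b^2*c*x 2*x 4 + 3*a*b^2*c*x 0*x 6 + a^2*x 2^2 + a^2*x 0*x 4 + a^2*b*d*x 2*x 4 + a^2*b*d*x 0*x 6 + a^2*b*c*x 2^2 + a^2*b*c*x 0*x 4 + a^3*d*x 2^2 + a^3*d*x 0*x 4 + 2*a^3*c*x 0*x 2)*hdet + (b^2*x 2*x 6 + b^3*d*x 4*x 6 + b^3*c*x 4^2 + 3*b^3*c*x 2*x 6 + b^4*d^2*x 6^2 + 2*b^4*c*d*x 4*x 6 + b^4*c^2*x 4^2 + 2*b^4*c^2*x 2*x 6 + -1*a*b*x 3^2 + a*b*x 2*x 4 + 2*a*b^2*c*x 2*x 4 + 2*a*b^2*c*x 0*x 6 + 2*a*b^3*c^2*x 2*x 4 + 2*a*b^3*c^2*x 0*x 6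 + a^2*b*c*x 2^2 + a^2*b*c*x 0*x 4 + a^2*b^2*c^2*x 2^2 + 2*a^2*b^2*c^2*x 0*x 4 + a^3*c*x 0*x 2 + 2*a^3*b*c^2*x 0*x 2 + a^4*c^2*x 0^2)*h2
  · linear_combination (a)*hQ2 + (b)*hQ4 + (-1*b*x 3*x 4 + b*x 2*x 5 + -1*b*x 1*x 6 + -1*b^2*d*x 3*x 6 + b^2*c*x 2*x 5 + -1*b^2*c*x 1*x 6 + a*x 2*x 3 + -1*a*x 1*x 4 + a*x 0*x 5 + -1*a*b*d*x 3*x 4 + a*b*d*x 2*x 5 + -1*a*b*d*x 1*x 6 + a*b*c*x 2*x 3 + -1*a*b*c*x 1*x 4 + a*b*c*x 0*x 5 + -1*a^2*d*x 1*x 4 + a^2*d*x 0*x 5 + a^2*c*x 0*x 3)*hdet + (-1*b*x 3*x 4 + b*x 2*x 5 + -1*b*x 1*x 6 + b^2*c*x 2*x 5 + -1*b^2*c*x 1*x 6 + a*b*c*x 2*x 3 + -1*a*b*c*x 1*x 4 + a*b*c*x 0*x 5 + a^2*c*x 0*x 3)*h2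
  · linear_combination (1)*hQ3 + (-1*x 2*x 4 + x 0*x 6 + -1*b*c*x 2*x 4 + b*c*x 0*x 6 + b^2*c^2*x 2*x 4 + -1*b^2*c^2*x 0*x 6 + -1*a*d*x 2*x 4 + a*d*x 0*x 6 + -1*a^2*d^2*x 2*x 4 + a^2*d^2*x 0*x 6)*hdet + (-1*b*c*x 2*x 4 + b*c*x 0*x 6)*h2
  · linear_combination (c)*hQ2 + (d)*hQ4 + (d*x 3*x 4 + -1*d*x 2*x 5 + d*x 1*x 6 + -1*c*x 2*x 3 + c*x 1*x 4 + -1*c*x 0*x 5 + b*d^2*x 3*x 6 + b*c*d*x 3*x 4 + -1*b*c*d*x 2*x 5 + b*c*d*x 1*x 6 + b*c^2*x 1*x 4 + -1*b*c^2*x 0*x 5 + -1*a*d^2*x 2*x 5 + a*d^2*x 1*x 6 + -1*a*c*d*x 2*x 3 + a*c*d*x 1*x 4 + -1*a*c*d*x 0*x 5 + -1*a*c^2*x 0*x 3)*hdet + (-1*c*x 2*x 3 + c*x 1*x 4 + -1*c*x 0*x 5 + b*d^2*x 3*x 6 + b*c*d*x 3*x 4 + -1*b*c*d*x 2*x 5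 + b*c*d*x 1*x 6 + b*c^2*x 1*x 4 + -1*b*c^2*x 0*x 5)*h2
  · linear_combination (c^2)*hQ1 + (c*d)*hQ3 + (d^2)*hQ5 + (d^2*x 4^2 + d^2*x 2*x 6 + c*d*x 2*x 4 + c*d*x 0*x 6 + c^2*x 2^2 + 3*c^2*x 0*x 4 + 2*b*d^3*x 4*x 6 + b*c*d^2*x 4^2 + b*c*d^2*x 2*x 6 + 3*b*c^2*d*x 2*x 4 + 3*b*c^2*d*x 0*x 6 + b*c^3*x 2^2 + 3*b*c^3*x 0*x 4 + a*d^3*x 4^2 + a*d^3*x 2*x 6 + a*c*d^2*x 2*x 4 + a*c*d^2*x 0*x 6 + a*c^2*d*x 2^2 + 3*a*c^2*d*x 0*x 4 + 2*a*c^3*x 0*x 2)*hdet + (-1*c*d*x 3^2 + c*d*x 2*x 4 + c^2*x 0*x 4 + b*d^3*x 4*x 6 + b*c*d^2*x 4^2 + b*c*d^2*x 2*x 6 + 2*b*c^2*d*x 2*x 4 + 2*b*c^2*d*x 0*x 6 + b*c^3*x 2^2 + 3*b*c^3*x 0*x 4 + b^2*d^4*x 6^2 + 2*b^2*c*d^3*x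 4*x 6 + b^2*c^2*d^2*x 4^2 + 2*b^2*c^2*d^2*x 2*x 6 + 2*b^2*c^3*d*x 2*x 4 + 2*b^2*c^3*d*x 0*x 6 + b^2*c^4*x 2^2 + 2*b^2*c^4*x 0*x 4 + a*c^3*x 0*x 2 + 2*a*b*c^4*x 0*x 2 + a^2*c^4*x 0^2)*h2
end

section
/- Let R be a commutative ring and let b, c ∈ R. Then U(b) · U(c) = U(b + c) as 7×7 matrices over R; in particular U(0) is the identity matrix and U(b) is invertible with inverse U(−b), so b ↦ U(b) is a one-parameter (additive) group of matrices. -/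
set_option maxHeartbeats 2000000

@[simp]
lemma cons_val_five {α : Type*} {m : ℕ} (x : α) (u : Fin m.succ.succ.succ.succ.succ → α) :
    Matrix.vecCons x u 5 = Matrix.vecHead (Matrix.vecTail (Matrix.vecTail (Matrix.vecTail (Matrix.vecTail u)))) :=
  rfl

@[simp]
lemma cons_val_six {α : Type*} {m : ℕ} (x : α) (u : Fin m.succ.succ.succ.succ.succ.succ → α) :
    Matrix.vecCons x u 6 =
      Matrix.vecHead (Matrix.vecTail (Matrix.vecTail (Matrix.vecTail (Matrix.vecTail (Matrix.vecTail u))))) :=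
  rfl

lemma Umat_mul {R : Type*} [CommRing R] (b c : R) :
    Umat b * Umat c = Umat (b + c) := by
  ext i j
  fin_cases i <;> fin_cases j <;>
    simp [Umat, Matrix.mul_apply, Fin.sum_univ_seven, Matrix.vecHead, Matrix.vecTail] <;> ring

lemma Umat_zero {R : Type*} [CommRing R] : Umat (0 : R) = 1 := by
  ext i j
  fin_cases i <;> fin_cases j <;>
    simp [Umat, Matrix.one_apply, Matrix.vecHead, Matrix.vecTail]

/-- `U(b)·U(c) = U(b+c)`, `U(0)` is the identity, and `U(b)` is invertible
with inverse `U(-b)`; so `b ↦ U(b)` is a one-parameter additive group of matrices. -/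
theorem stmt_17 {R : Type*} [CommRing R] (b c : R) :
    Umat b * Umat c = Umat (b + c) ∧
    Umat (0 : R) = 1 ∧
    Umat b * Umat (-b) = 1 ∧
    Umat (-b) * Umat b = 1 := by
  refine ⟨Umat_mul b c, Umat_zero, ?_, ?_⟩ <;>
    rw [Umat_mul] <;> simp [Umat_zero]
end

section
/- Let R be a commutative ring in which 2 is invertible, and let x, y ∈ R. Set a = (xy − y⁵, x, y³, y², y, 1, 0) ∈ R⁷. Then: (i) Q₁(a) = Q₂(a) = Q₃(a) = Q₄(a) = Q₅(a) = 0, i.e. the point Φ(x,y) = (xy−y⁵ : x : y³ : y² : y : 1 : 0) lies on the split quintic del Pezzo threefold Y; and (ii) U(−y/2) · a = (0, x − (5/4)y⁴, 0, 0, 0, 1, 0), i.e. acting by the unipotent matrix with parameter −y/2 moves Φ(x,y) to the point (0 : x − (5/4)y⁴ : 0 : 0 : 0 : 1 : 0). -/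
/-- The paper's parametrization `Φ` of the chart `Y ∩ {a₆ = 0, a₅ ≠ 0}`. -/
def quinticChart {R : Type*} [CommRing R] (x y : R) : Fin 7 → R :=
  ![x * y - y ^ 5, x, y ^ 3, y ^ 2, y, 1, 0]

section

open scoped Matrix

variable {R : Type*} [CommRing R]

theorem quinticChart_quadrics (x y : R) :
    let v := quinticChart x y
    v 0 * v 4 - v 1 * v 3 + (v 2) ^ 2 = 0 ∧
    v 0 * v 5 - v 1 * v 4 + v 2 * v 3 = 0 ∧
    v 0 * v 6 - v 2 * v 4 + (v 3) ^ 2 = 0 ∧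
    v 1 * v 6 - v 2 * v 5 + v 3 * v 4 = 0 ∧
    v 2 * v 6 - v 3 * v 5 + (v 4) ^ 2 = 0 := by
  simp only [quinticChart, Matrix.cons_val]
  refine ⟨?_, ?_, ?_, ?_, ?_⟩ <;> ring

theorem Umat_mulVec_quinticChart (x y b : R) (hb : y = -2 * b) :
    Umat b *ᵥ quinticChart x y = ![0, x - 20 * b ^ 4, 0, 0, 0, 1, 0] := by
  subst hb
  ext i
  fin_cases i <;>
    simp [Umat, quinticChart] <;> ring

end

/-- In a commutative ring where 2 is invertible, the point
`Φ(x,y) = (xy - y⁵, x, y³, y², y, 1, 0)` of the affine chart of `Y`: (i) satisfies the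
five quadrics `Q₁, …, Q₅` cutting out `Y`; and (ii) is moved by the unipotent matrix
`U(-y/2)` to the point `(0, x - (5/4)y⁴, 0, 0, 0, 1, 0)`. -/
theorem stmt_19 {R : Type*} [CommRing R] [Invertible (2 : R)] (x y : R)
    (v : Fin 7 → R) (hv : v = ![x * y - y ^ 5, x, y ^ 3, y ^ 2, y, 1, 0]) :
    (v 0 * v 4 - v 1 * v 3 + (v 2) ^ 2 = 0 ∧
     v 0 * v 5 - v 1 * v 4 + v 2 * v 3 = 0 ∧
     v 0 * v 6 - v 2 * v 4 + (v 3) ^ 2 = 0 ∧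
     v 1 * v 6 - v 2 * v 5 + v 3 * v 4 = 0 ∧
     v 2 * v 6 - v 3 * v 5 + (v 4) ^ 2 = 0) ∧
    Matrix.mulVec (Umat (-(⅟(2 : R) * y))) v =
      ![0, x - 5 * (⅟(2 : R) * ⅟(2 : R)) * y ^ 4, 0, 0, 0, 1, 0] := by
  change v = quinticChart x y at hv
  subst hv
  refine ⟨quinticChart_quadrics x y, ?_⟩
  rw [Umat_mulVec_quinticChart x y _ (by rw [neg_mul_neg, mul_invOf_cancel_left])]
  congr 3
  linear_combination (5 * ⅟(2 : R) ^ 2 * y ^ 4 * (2 * ⅟(2 : R) + 1)) * invOf_mul_self (2 : R)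
end
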